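/- Let f : R^d → R be differentiable, convex, and L-smooth with minimizer x*. For any x, x̃ ∈ R^d and stepsize γ with 0 < γ < 1/(4L), defining x̃' = x̃ − γ∇f(x), one has ‖x̃' − x*‖² ≤ ‖x̃ − x*‖² − (γ/2)(f(x) − f*) + 2Lγ‖x − x̃‖². -/

import Mathlib

/-!
Expand `‖x̃ - γ ∇f(x) - x*‖²`. The cross term `-2γ ⟪∇f(x), x̃ - x*⟫` splits at `x`: the part
`⟪∇f(x), x - x*⟫` is at least `f x - f*` by convexity, and the part `⟪∇f(x), x̃ - x⟫` is handled
by Young's inequality. Every `‖∇f(x)‖²` that appears is then absorbed by the smoothness bound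
`‖∇f(x)‖² ≤ 2L (f x - f*)`, which comes from the descent lemma at the point `x - ∇f(x) / L`.
-/

open scoped RealInnerProductSpace

section LipschitzGradient

variable {E : Type*} [NormedAddCommGroup E] [InnerProductSpace ℝ E] [CompleteSpace E]
  {f : E → ℝ} {g : E → E}

theorem HasGradientAt.hasDerivAt_comp_add_smul {f' x v : E} {t : ℝ}
    (h : HasGradientAt f f' (x + t • v)) :
    HasDerivAt (fun s : ℝ => f (x + s • v)) ⟪f', v⟫ t := by
  have hline : HasDerivAt (fun s : ℝ => x + s • v) v t := by
    simpa using ((hasDerivAt_id t).smul_const v).const_add x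
  exact h.hasFDerivAt.comp_hasDerivAt t hline

theorem le_add_inner_add_of_lipschitz_gradient (hgrad : ∀ x, HasGradientAt f (g x) x) {L : ℝ}
    (hsmooth : ∀ x y, ‖g x - g y‖ ≤ L * ‖x - y‖) (x v : E) :
    f (x + v) ≤ f x + ⟪g x, v⟫ + L / 2 * ‖v‖ ^ 2 := by
  set φ : ℝ → ℝ := fun t => f (x + t • v) - t * ⟪g x, v⟫ - L / 2 * t ^ 2 * ‖v‖ ^ 2
  have hφ : ∀ t, HasDerivAt φ (⟪g (x + t • v), v⟫ - ⟪g x, v⟫ - L * t * ‖v‖ ^ 2) t := by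
    intro t
    have hlinear : HasDerivAt (fun s : ℝ => s * ⟪g x, v⟫) ⟪g x, v⟫ t := by
      simpa using (hasDerivAt_id t).mul_const ⟪g x, v⟫
    have hquad : HasDerivAt (fun s : ℝ => L / 2 * s ^ 2 * ‖v‖ ^ 2) (L * t * ‖v‖ ^ 2) t :=
      (((hasDerivAt_pow 2 t).const_mul (L / 2)).mul_const (‖v‖ ^ 2)).congr_deriv (by ring)
    exact (((hgrad _).hasDerivAt_comp_add_smul).sub hlinear).sub hquad
  have hderiv_nonpos : ∀ t ∈ interior (Set.Icc (0 : ℝ) 1), deriv φ t ≤ 0 := by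
    intro t ht
    rw [interior_Icc] at ht
    have hlip : ‖g (x + t • v) - g x‖ ≤ L * (t * ‖v‖) := by
      simpa [norm_smul, abs_of_pos ht.1] using hsmooth (x + t • v) x
    have hcs : ⟪g (x + t • v), v⟫ - ⟪g x, v⟫ ≤ ‖g (x + t • v) - g x‖ * ‖v‖ := by
      rw [← inner_sub_left]
      exact real_inner_le_norm _ _
    rw [(hφ t).deriv]
    nlinarith [mul_le_mul_of_nonneg_right hlip (norm_nonneg v)]
  have hanti : AntitoneOn φ (Set.Icc 0 1) :=
    antitoneOn_of_deriv_nonpos (convex_Icc 0 1)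
      (fun t _ => (hφ t).continuousAt.continuousWithinAt)
      (fun t _ => (hφ t).differentiableAt.differentiableWithinAt) hderiv_nonpos
  have h01 := hanti (Set.left_mem_Icc.2 zero_le_one) (Set.right_mem_Icc.2 zero_le_one)
    zero_le_one
  simp only [φ, one_smul, zero_smul, add_zero, one_mul, one_pow, mul_zero, zero_mul, sub_zero,
    ne_eq, OfNat.ofNat_ne_zero, not_false_eq_true, zero_pow] at h01
  linarith

theorem norm_sq_le_of_lipschitz_gradient (hgrad : ∀ x, HasGradientAt f (g x) x) {L : ℝ}
    (hL : 0 < L) (hsmooth : ∀ x y, ‖g x - g y‖ ≤ L * ‖x - y‖) {xstar : E}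
    (hmin : ∀ y, f xstar ≤ f y) (x : E) :
    ‖g x‖ ^ 2 ≤ 2 * L * (f x - f xstar) := by
  have hdescent := le_add_inner_add_of_lipschitz_gradient hgrad hsmooth x (-(L⁻¹ • g x))
  rw [inner_neg_right, real_inner_smul_right, real_inner_self_eq_norm_sq, norm_neg, norm_smul,
    Real.norm_of_nonneg (inv_nonneg.2 hL.le)] at hdescent
  have hstep : f x - f xstar ≥ ‖g x‖ ^ 2 / (2 * L) := by
    have h := hmin (x + -(L⁻¹ • g x))
    have e : L⁻¹ * ‖g x‖ ^ 2 - L / 2 * (L⁻¹ * ‖g x‖) ^ 2 = ‖g x‖ ^ 2 / (2 * L) := by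
      field_simp
      ring
    linarith
  rwa [ge_iff_le, div_le_iff₀ (by positivity), mul_comm] at hstep

end LipschitzGradient

/-- One-step inequality in the perturbed iterate analysis: if `f` is differentiable
with gradient `g`, convex, `L`-smooth, with minimizer `xstar`, and `0 < γ < 1/(4L)`,
then for `x̃' = x̃ − γ • g x`,
`‖x̃' − x*‖² ≤ ‖x̃ − x*‖² − (γ/2)(f x − f*) + 2Lγ‖x − x̃‖²`. -/
theorem perturbed_iterate_step
    (d : ℕ) (f : EuclideanSpace ℝ (Fin d) → ℝ)
    (g : EuclideanSpace ℝ (Fin d) → EuclideanSpace ℝ (Fin d))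
    (hgrad : ∀ x, HasGradientAt f (g x) x)
    (hconvex : ∀ x y, f x + (inner ℝ (g x) (y - x) : ℝ) ≤ f y)
    (L : ℝ) (hL : 0 < L)
    (hsmooth : ∀ x y, ‖g x - g y‖ ≤ L * ‖x - y‖)
    (xstar : EuclideanSpace ℝ (Fin d)) (hmin : ∀ y, f xstar ≤ f y)
    (γ : ℝ) (hγ : 0 < γ) (hγL : γ < 1 / (4 * L))
    (x xt : EuclideanSpace ℝ (Fin d)) :
    ‖(xt - γ • g x) - xstar‖ ^ 2 ≤
      ‖xt - xstar‖ ^ 2 - (γ / 2) * (f x - f xstar) + 2 * L * γ * ‖x - xt‖ ^ 2 := by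
  have hexpand : ‖(xt - γ • g x) - xstar‖ ^ 2
      = ‖xt - xstar‖ ^ 2 - 2 * γ * ⟪g x, xt - xstar⟫ + γ ^ 2 * ‖g x‖ ^ 2 := by
    rw [sub_right_comm, norm_sub_sq_real, real_inner_smul_right, real_inner_comm, norm_smul,
      Real.norm_of_nonneg hγ.le]
    ring
  have hinner : f x - f xstar - ‖g x‖ * ‖x - xt‖ ≤ ⟪g x, xt - xstar⟫ := by
    have hsplit : xt - xstar = -(xstar - x) - (x - xt) := by abel
    rw [hsplit, inner_sub_right, inner_neg_right]
    linarith [hconvex x xstar, real_inner_le_norm (g x) (x - xt)]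
  have hgrad_sq := norm_sq_le_of_lipschitz_gradient hgrad hL hsmooth hmin x
  have hyoung : 2 * ‖g x‖ * ‖x - xt‖ ≤ ‖g x‖ ^ 2 / (2 * L) + 2 * L * ‖x - xt‖ ^ 2 := by
    rw [div_add' _ _ _ (by positivity), le_div_iff₀ (by positivity)]
    nlinarith [sq_nonneg (‖g x‖ - 2 * L * ‖x - xt‖)]
  have hγL' : 4 * L * γ < 1 := by rwa [lt_div_iff₀ (by positivity), mul_comm] at hγL
  have hgap : 0 ≤ f x - f xstar := sub_nonneg.2 (hmin x)
  have habsorb : ‖g x‖ ^ 2 / (2 * L) ≤ f x - f xstar := by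
    rwa [div_le_iff₀ (by positivity), mul_comm]
  rw [hexpand]
  nlinarith [mul_le_mul_of_nonneg_left hgrad_sq (sq_nonneg γ), mul_le_mul_of_nonneg_left hgap hγ.le]
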